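/- Consider the symmetric case b = 1/2 and write f_a = f_{a,1/2}. For every a > 0: (i) every x ∈ (0,1) with f_a(f_a(x)) = x satisfies f_a(x) = 1 − x (so every period-2 orbit of f_a in (0,1) has the form {σ, 1−σ}); and (ii) for every x ∈ (0,1), the sequence (f_a^{2n}(x))_{n∈ℕ} converges to some p ∈ (0,1) with f_a(f_a(p)) = p, i.e., every trajectory converges to a fixed point or to a periodic orbit of period 2 of f_a. -/

import Mathlib

/-!
In the score variable `y = Ψ x` the map `f` becomes `T y = y + a (Ψ⁻¹ y - 1/2)`, and the
symmetry `Ψ⁻¹ (-y) = 1 - Ψ⁻¹ y` makes `T` odd, so `f²` is conjugate to `S²` with `S = -T`.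
Here `S y + y = a (1/2 - Ψ⁻¹ y)` is strictly increasing. For such a map every orbit point `z n`
bounds the rest of the orbit from below if `z n ≤ z (n + 1)` and from above otherwise. Hence if
`A = liminf z < c < limsup z = B`, the orbit crosses the level `c` infinitely often in both
directions, at points accumulating at `A` and `B`; continuity gives `S A = B` and `S B = A`, so
`S A + A = S B + B`, contradicting strict monotonicity. Bounded orbits of `S` therefore converge
to fixed points of `S`, and these correspond to orbits `{p, 1 - p}` of `f`.
Part (i) is the identity `Ψ (f (f x)) = Ψ x + a (x + f x - 1)`.
-/

open Filter Function Set Topology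

theorem Nat.frequently_not_and_succ {p : ℕ → Prop} (hnot : ∃ᶠ n in atTop, ¬p n)
    (hp : ∃ᶠ n in atTop, p n) : ∃ᶠ n in atTop, ¬p n ∧ p (n + 1) := by
  refine frequently_atTop.2 fun N => ?_
  obtain ⟨n₀, hN, hn₀⟩ := frequently_atTop.1 hnot N
  obtain ⟨n₁, hn₀₁, hn₁⟩ := frequently_atTop.1 hp n₀
  obtain ⟨k, hk, hk'⟩ := Nat.exists_not_and_succ_of_not_zero_of_exists
    (p := fun k => p (n₀ + k)) (by simpa using hn₀) ⟨n₁ - n₀, by rwa [Nat.add_sub_cancel' hn₀₁]⟩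
  exact ⟨n₀ + k, by omega, hk, hk'⟩

section LiminfLimsup

variable {α β : Type*} [ConditionallyCompleteLinearOrder β] [TopologicalSpace β] [OrderTopology β]
  {l F : Filter α} {u : α → β}

theorem tendsto_liminf_of_eventually_le (hF : F ≤ l) (hu : IsBoundedUnder (· ≥ ·) l u)
    (h : ∀ᶠ n in F, u n ≤ liminf u l) : Tendsto u F (𝓝 (liminf u l)) :=
  tendsto_order.2 ⟨fun _ ha => hF (eventually_lt_of_lt_liminf ha hu),
    fun _ hb => h.mono fun _ hn => hn.trans_lt hb⟩

theorem tendsto_limsup_of_eventually_ge (hF : F ≤ l) (hu : IsBoundedUnder (· ≤ ·) l u)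
    (h : ∀ᶠ n in F, limsup u l ≤ u n) : Tendsto u F (𝓝 (limsup u l)) :=
  tendsto_order.2 ⟨fun _ ha => h.mono fun _ hn => ha.trans_le hn,
    fun _ hb => hF (eventually_lt_of_limsup_lt hb hu)⟩

end LiminfLimsup

theorem Antitone.continuous_of_isOpen_range {α β : Type*} [LinearOrder α] [TopologicalSpace α]
    [OrderTopology α] [LinearOrder β] [TopologicalSpace β] [OrderTopology β] [DenselyOrdered β]
    {g : α → β} (hg : Antitone g) (hr : IsOpen (range g)) : Continuous g :=
  continuous_iff_continuousAt.2 fun x =>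
    continuousAt_of_monotoneOn_of_image_mem_nhds (β := βᵒᵈ) (fun _ _ _ _ h => hg h) univ_mem
      (image_univ (f := g) ▸ hr.mem_nhds (mem_range_self x))

theorem StrictAntiOn.strictAnti_of_rightInvOn {α β : Type*} [LinearOrder α] [Preorder β]
    {f : α → β} {g : β → α} {s : Set α} (hf : StrictAntiOn f s) (hg : ∀ y, g y ∈ s)
    (hfg : ∀ y, f (g y) = y) : StrictAnti g := by
  intro y₁ y₂ h
  by_contra! hle
  have := (hf.le_iff_ge (hg y₂) (hg y₁)).2 hle
  rw [hfg, hfg] at this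
  exact h.not_ge this

theorem iterate_two_mul_neg {α : Type*} [InvolutiveNeg α] {T : α → α}
    (hT : ∀ y, T (-y) = -T y) (n : ℕ) : (fun y => -T y)^[2 * n] = T^[2 * n] := by
  rw [iterate_mul, iterate_mul]
  congr 1
  funext y
  simp [hT]

section Orbit

variable {S : ℝ → ℝ} {z : ℕ → ℝ}

theorem le_of_le_succ_of_monotone_add_self (hS : Monotone fun y => S y + y)
    (hz : ∀ n, z (n + 1) = S (z n)) {n m : ℕ} (hn : z n ≤ z (n + 1)) (hm : n ≤ m) :
    z n ≤ z m := by
  induction m using Nat.strong_induction_on with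
  | _ m ih =>
  rcases hm.eq_or_lt with rfl | hnm
  · exact le_rfl
  obtain ⟨m, rfl⟩ : ∃ k, m = k + 1 := ⟨m - 1, by omega⟩
  by_contra! hlt
  -- `z (j + 1) + z j ≤ z (m + 1) + z m < z n + z m`: a step from below `z m` stays below it
  have step : ∀ j, n ≤ j → j ≤ m → z j ≤ z m → z (j + 1) < z m := by
    intro j hnj hjm hj
    have h := hS hj
    simp only [← hz] at h
    linarith [ih j (by omega) hnj]
  have below : ∀ j, n + 1 ≤ j → j ≤ m → z j < z m := by
    intro j hnj
    induction j, hnj using Nat.le_induction with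
    | base => exact fun _ => step n le_rfl (by omega) (ih m (by omega) (by omega))
    | succ j hnj ihj => exact fun hjm => step j (by omega) (by omega) (ihj (by omega)).le
  rcases (Nat.lt_succ_iff.1 hnm).eq_or_lt with rfl | hnm'
  · exact (step n le_rfl le_rfl le_rfl).not_ge hn
  · exact lt_irrefl _ (below m hnm' le_rfl)

theorem le_of_succ_le_of_monotone_add_self (hS : Monotone fun y => S y + y)
    (hz : ∀ n, z (n + 1) = S (z n)) {n m : ℕ} (hn : z (n + 1) ≤ z n) (hm : n ≤ m) :
    z m ≤ z n :=
  neg_le_neg_iff.1 <| le_of_le_succ_of_monotone_add_self (S := fun y => -S (-y))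
    (z := fun k => -z k) (fun u v huv => by have := hS (neg_le_neg huv); dsimp; linarith)
    (fun k => by simp [hz]) (neg_le_neg hn) hm

theorem le_liminf_of_le_succ (hS : Monotone fun y => S y + y) (hz : ∀ n, z (n + 1) = S (z n))
    (hle : IsBoundedUnder (· ≤ ·) atTop z) {n : ℕ} (hn : z n ≤ z (n + 1)) :
    z n ≤ liminf z atTop :=
  le_liminf_of_le hle.isCoboundedUnder_ge <|
    eventually_atTop.2 ⟨n, fun _ => le_of_le_succ_of_monotone_add_self hS hz hn⟩

theorem limsup_le_of_succ_le (hS : Monotone fun y => S y + y) (hz : ∀ n, z (n + 1) = S (z n))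
    (hge : IsBoundedUnder (· ≥ ·) atTop z) {n : ℕ} (hn : z (n + 1) ≤ z n) :
    limsup z atTop ≤ z n :=
  limsup_le_of_le hge.isCoboundedUnder_le <|
    eventually_atTop.2 ⟨n, fun _ => le_of_succ_le_of_monotone_add_self hS hz hn⟩

theorem apply_eq_of_tendsto {F : Filter ℕ} [F.NeBot] {u v : ℝ} (hS : ContinuousAt S u)
    (hz : ∀ n, z (n + 1) = S (z n)) (hu : Tendsto z F (𝓝 u))
    (hv : Tendsto z (F.map (· + 1)) (𝓝 v)) : S u = v :=
  tendsto_nhds_unique (hS.tendsto.comp hu) (by simpa only [tendsto_map'_iff, comp_def, hz] using hv)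

theorem liminf_eq_limsup_of_strictMono_add_self (hS : StrictMono fun y => S y + y)
    (hSc : Continuous S) (hz : ∀ n, z (n + 1) = S (z n))
    (hle : IsBoundedUnder (· ≤ ·) atTop z) (hge : IsBoundedUnder (· ≥ ·) atTop z) :
    liminf z atTop = limsup z atTop := by
  set A := liminf z atTop
  set B := limsup z atTop
  have le_A : ∀ n, z n ≤ z (n + 1) → z n ≤ A := fun _ => le_liminf_of_le_succ hS.monotone hz hle
  have B_le : ∀ n, z (n + 1) ≤ z n → B ≤ z n := fun _ => limsup_le_of_succ_le hS.monotone hz hge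
  refine (liminf_le_limsup hle hge).eq_of_not_lt fun hAB => ?_
  obtain ⟨c, hAc, hcB⟩ := exists_between hAB
  have below : ∃ᶠ n in atTop, z n < c := frequently_lt_of_liminf_lt hle.isCoboundedUnder_ge hAc
  have above : ∃ᶠ n in atTop, c < z n := frequently_lt_of_lt_limsup hge.isCoboundedUnder_le hcB
  have hSA : S A = B := by
    set U := {n | ¬c ≤ z n ∧ c ≤ z (n + 1)}
    have : (atTop ⊓ 𝓟 U).NeBot := frequently_iff_neBot.1 <| Nat.frequently_not_and_succ
      (p := fun n => c ≤ z n) (below.mono fun _ => not_le.2) (above.mono fun _ => le_of_lt)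
    have hU : U ∈ atTop ⊓ 𝓟 U := mem_inf_of_right (mem_principal_self U)
    refine apply_eq_of_tendsto (F := atTop ⊓ 𝓟 U) hSc.continuousAt hz
      (tendsto_liminf_of_eventually_le inf_le_left hge ?_)
      (tendsto_limsup_of_eventually_ge ((tendsto_add_atTop_nat 1).mono_left inf_le_left) hle ?_)
    · exact mem_of_superset hU fun n hn => le_A n ((not_le.1 hn.1).le.trans hn.2)
    · refine mem_map.2 (mem_of_superset hU fun n hn => ?_)
      rcases le_or_gt (z (n + 1)) (z (n + 1 + 1)) with h | h
      · linarith [le_A _ h, hn.2]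
      · exact B_le _ h.le
  have hSB : S B = A := by
    set D := {n | ¬z n < c ∧ z (n + 1) < c}
    have : (atTop ⊓ 𝓟 D).NeBot := frequently_iff_neBot.1 <| Nat.frequently_not_and_succ
      (p := fun n => z n < c) (above.mono fun _ => not_lt.2 ∘ le_of_lt) below
    have hD : D ∈ atTop ⊓ 𝓟 D := mem_inf_of_right (mem_principal_self D)
    refine apply_eq_of_tendsto (F := atTop ⊓ 𝓟 D) hSc.continuousAt hz
      (tendsto_limsup_of_eventually_ge inf_le_left hle ?_)
      (tendsto_liminf_of_eventually_le ((tendsto_add_atTop_nat 1).mono_left inf_le_left) hge ?_)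
    · exact mem_of_superset hD fun n hn => B_le n (hn.2.le.trans (not_lt.1 hn.1))
    · refine mem_map.2 (mem_of_superset hD fun n hn => ?_)
      rcases le_or_gt (z (n + 1 + 1)) (z (n + 1)) with h | h
      · linarith [B_le _ h, hn.2]
      · exact le_A _ h.le
  exact hAB.ne (hS.injective (show S A + A = S B + B by rw [hSA, hSB, add_comm]))

end Orbit

theorem exists_tendsto_iterate_of_strictMono_add_self {S : ℝ → ℝ}
    (hS : StrictMono fun y => S y + y) (hSc : Continuous S) {y C : ℝ}
    (hC : ∀ n, |S^[n] y| ≤ C) : ∃ L, IsFixedPt S L ∧ Tendsto (fun n => S^[n] y) atTop (𝓝 L) := by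
  have hle : IsBoundedUnder (· ≤ ·) atTop fun n => S^[n] y :=
    isBoundedUnder_of ⟨C, fun n => (abs_le.1 (hC n)).2⟩
  have hge : IsBoundedUnder (· ≥ ·) atTop fun n => S^[n] y :=
    isBoundedUnder_of ⟨-C, fun n => (abs_le.1 (hC n)).1⟩
  have hL := tendsto_of_liminf_eq_limsup rfl (liminf_eq_limsup_of_strictMono_add_self hS hSc
    (fun n => iterate_succ_apply' S n y) hle hge).symm hle hge
  exact ⟨_, isFixedPt_of_tendsto_iterate hL hSc.continuousAt, hL⟩

theorem abs_iterate_le_max {S : ℝ → ℝ} (hS : Monotone fun y => S y + y) (h0 : S 0 = 0) {c : ℝ}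
    (hc : ∀ y, |S y + y| ≤ c) (y : ℝ) (n : ℕ) : |S^[n] y| ≤ max |y| c := by
  induction n with
  | zero => exact le_max_left _ _
  | succ n ih =>
    rw [iterate_succ_apply']
    set w := S^[n] y
    have hw := abs_le.1 (hc w)
    have := le_max_right |y| c
    have := neg_abs_le w
    have := le_abs_self w
    rcases le_total 0 w with hw0 | hw0 <;>
    · have := hS hw0
      simp only [h0, zero_add] at this
      rw [abs_le]
      constructor <;> linarith

noncomputable def scoreStep (Ψinv : ℝ → ℝ) (a y : ℝ) : ℝ := y + a * (Ψinv y - 1 / 2)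

section FoReL

variable {Ψ Ψinv f : ℝ → ℝ} {a : ℝ}

theorem apply_neg_eq_one_sub (hΨsym : ∀ x ∈ Ioo (0:ℝ) 1, Ψ (1 - x) = -Ψ x)
    (hinv1 : ∀ x ∈ Ioo (0:ℝ) 1, Ψinv (Ψ x) = x)
    (hinv2 : ∀ y : ℝ, Ψinv y ∈ Ioo (0:ℝ) 1 ∧ Ψ (Ψinv y) = y) (y : ℝ) :
    Ψinv (-y) = 1 - Ψinv y := by
  have hmem : 1 - Ψinv y ∈ Ioo (0:ℝ) 1 :=
    ⟨by linarith [(hinv2 y).1.2], by linarith [(hinv2 y).1.1]⟩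
  rw [← hinv1 _ hmem, hΨsym _ (hinv2 y).1, (hinv2 y).2]

theorem scoreStep_neg (hodd : ∀ y, Ψinv (-y) = 1 - Ψinv y) (y : ℝ) :
    scoreStep Ψinv a (-y) = -scoreStep Ψinv a y := by
  simp only [scoreStep, hodd]
  ring

theorem semiconj_scoreStep (hinv2 : ∀ y : ℝ, Ψinv y ∈ Ioo (0:ℝ) 1 ∧ Ψ (Ψinv y) = y)
    (hf : ∀ x ∈ Ioo (0:ℝ) 1, f x = Ψinv (Ψ x + a * (x - 1/2))) :
    Semiconj Ψinv (scoreStep Ψinv a) f := fun y => by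
  rw [hf _ (hinv2 y).1, (hinv2 y).2, scoreStep]

theorem strictMono_neg_scoreStep_add_self (ha : 0 < a) (hanti : StrictAnti Ψinv) :
    StrictMono fun y => -scoreStep Ψinv a y + y := fun u v h => by
  have := mul_lt_mul_of_pos_left (hanti h) ha
  simp only [scoreStep]
  linarith

theorem abs_neg_scoreStep_add_self_le (ha : 0 < a) (hinv : ∀ y, Ψinv y ∈ Ioo (0:ℝ) 1) (y : ℝ) :
    |-scoreStep Ψinv a y + y| ≤ a / 2 := by
  have := mul_pos ha (hinv y).1
  have := mul_pos ha (sub_pos.2 (hinv y).2)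
  rw [abs_le, scoreStep]
  constructor <;> nlinarith

theorem exists_tendsto_iterate_neg_scoreStep (ha : 0 < a) (hanti : StrictAnti Ψinv)
    (hcont : Continuous Ψinv) (hodd : ∀ y, Ψinv (-y) = 1 - Ψinv y)
    (hinv : ∀ y, Ψinv y ∈ Ioo (0:ℝ) 1) (y : ℝ) :
    ∃ L, IsFixedPt (fun y => -scoreStep Ψinv a y) L ∧
      Tendsto (fun n => (fun y => -scoreStep Ψinv a y)^[n] y) atTop (𝓝 L) := by
  have hS := strictMono_neg_scoreStep_add_self ha hanti
  have h0 : -scoreStep Ψinv a 0 = 0 := by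
    have := scoreStep_neg (a := a) hodd 0
    rw [neg_zero] at this
    linarith
  exact exists_tendsto_iterate_of_strictMono_add_self hS (by unfold scoreStep; fun_prop)
    (abs_iterate_le_max hS.monotone h0 (abs_neg_scoreStep_add_self_le ha hinv) y)

theorem apply_eq_one_sub_of_apply_apply_eq (ha : a ≠ 0)
    (hinv2 : ∀ y : ℝ, Ψinv y ∈ Ioo (0:ℝ) 1 ∧ Ψ (Ψinv y) = y)
    (hf : ∀ x ∈ Ioo (0:ℝ) 1, f x = Ψinv (Ψ x + a * (x - 1/2))) {x : ℝ} (hx : x ∈ Ioo (0:ℝ) 1)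
    (h : f (f x) = x) : f x = 1 - x := by
  have hΨf : ∀ t ∈ Ioo (0:ℝ) 1, f t ∈ Ioo (0:ℝ) 1 ∧ Ψ (f t) = Ψ t + a * (t - 1/2) :=
    fun t ht => hf t ht ▸ hinv2 _
  have h₁ := hΨf x hx
  have h₂ := (hΨf (f x) h₁.1).2
  rw [h, h₁.2] at h₂
  have : a * (x + f x - 1) = 0 := by linarith
  linarith [(mul_eq_zero.1 this).resolve_left ha]

end FoReL

theorem stmt17_general
    (Ψ Ψinv : ℝ → ℝ)
    (hΨanti : StrictAntiOn Ψ (Set.Ioo 0 1))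
    (hΨsym : ∀ x ∈ Set.Ioo (0:ℝ) 1, Ψ (1 - x) = -Ψ x)
    (hinv1 : ∀ x ∈ Set.Ioo (0:ℝ) 1, Ψinv (Ψ x) = x)
    (hinv2 : ∀ y : ℝ, Ψinv y ∈ Set.Ioo (0:ℝ) 1 ∧ Ψ (Ψinv y) = y)
    (a : ℝ) (ha : 0 < a)
    (f : ℝ → ℝ)
    (hf : ∀ x ∈ Set.Ioo (0:ℝ) 1, f x = Ψinv (Ψ x + a * (x - 1/2))) :
    (∀ x ∈ Set.Ioo (0:ℝ) 1, f (f x) = x → f x = 1 - x) ∧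
    (∀ x ∈ Set.Ioo (0:ℝ) 1, ∃ p ∈ Set.Ioo (0:ℝ) 1,
      f (f p) = p ∧
      Filter.Tendsto (fun n : ℕ => f^[2 * n] x) Filter.atTop (nhds p)) := by
  refine ⟨fun x hx => apply_eq_one_sub_of_apply_apply_eq ha.ne' hinv2 hf hx, fun x hx => ?_⟩
  have hanti := hΨanti.strictAnti_of_rightInvOn (fun y => (hinv2 y).1) (fun y => (hinv2 y).2)
  have hcont : Continuous Ψinv := hanti.antitone.continuous_of_isOpen_range <| by
    rw [Subset.antisymm (range_subset_iff.2 fun y => (hinv2 y).1) fun t ht => ⟨Ψ t, hinv1 t ht⟩]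
    exact isOpen_Ioo
  have hodd := apply_neg_eq_one_sub hΨsym hinv1 hinv2
  have hTodd : ∀ y, scoreStep Ψinv a (-y) = -scoreStep Ψinv a y := scoreStep_neg hodd
  have hconj := semiconj_scoreStep hinv2 hf
  obtain ⟨L, hfix, hL⟩ :=
    exists_tendsto_iterate_neg_scoreStep ha hanti hcont hodd (fun y => (hinv2 y).1) (Ψ x)
  have hTL : scoreStep Ψinv a L = -L := neg_eq_iff_eq_neg.1 hfix
  refine ⟨Ψinv L, (hinv2 L).1, ?_, ?_⟩
  · rw [← hconj, ← hconj, hTL, hTodd, hTL, neg_neg]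
  · have hiter : ∀ n, f^[2 * n] x = Ψinv ((fun y => -scoreStep Ψinv a y)^[2 * n] (Ψ x)) :=
      fun n => by rw [iterate_two_mul_neg hTodd, hconj.iterate_right, hinv1 x hx]
    simp only [hiter]
    exact (hcont.tendsto L).comp (hL.comp (strictMono_mul_left_of_pos two_pos).tendsto_atTop)

theorem stmt17
    (Ψ Ψinv : ℝ → ℝ)
    (hΨcont : ContinuousOn Ψ (Set.Ioo 0 1))
    (hΨanti : StrictAntiOn Ψ (Set.Ioo 0 1))
    (hΨbij : Set.BijOn Ψ (Set.Ioo 0 1) Set.univ)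
    (hΨsym : ∀ x ∈ Set.Ioo (0:ℝ) 1, Ψ (1 - x) = -Ψ x)
    (hinv1 : ∀ x ∈ Set.Ioo (0:ℝ) 1, Ψinv (Ψ x) = x)
    (hinv2 : ∀ y : ℝ, Ψinv y ∈ Set.Ioo (0:ℝ) 1 ∧ Ψ (Ψinv y) = y)
    (a : ℝ) (ha : 0 < a)
    (f : ℝ → ℝ) (hf0 : f 0 = 0) (hf1 : f 1 = 1)
    (hf : ∀ x ∈ Set.Ioo (0:ℝ) 1, f x = Ψinv (Ψ x + a * (x - 1/2))) :
    (∀ x ∈ Set.Ioo (0:ℝ) 1, f (f x) = x → f x = 1 - x) ∧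
    (∀ x ∈ Set.Ioo (0:ℝ) 1, ∃ p ∈ Set.Ioo (0:ℝ) 1,
      f (f p) = p ∧
      Filter.Tendsto (fun n : ℕ => f^[2 * n] x) Filter.atTop (nhds p)) :=
  stmt17_general Ψ Ψinv hΨanti hΨsym hinv1 hinv2 a ha f hf
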